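/- The radical of an iterative q-difference ideal in an iterative q-difference ring is again an iterative q-difference ideal (i.e. it is stable under all δ^{(k)}). -/

import Mathlib

/-!
Fix `a ∈ √I` and argue by strong induction on `k`; put `N = k + 1`, `b = δ^{(N)} a`, and
pick `a ^ m ∈ I`. By the twisted Leibniz rule, `δ^{(mN)}(a ^ m) ≡ ∏_{r<m} σ^{rN}(b)` modulo
`√I`, so this product lies in `√I`. With `c = (q^N - 1) t`, the iteration rule gives
`c b = σ(δ^{(k)} a) - δ^{(k)} a ∈ √I`, while the q-Taylor formula
`σ^m z = ∑_l ∏_{j<l} (q^m - q^j) t^l δ^{(l)} z` shows `σ^{rN} b ≡ b` modulo `c`.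
Hence `b ^ (m + 1) ≡ b ∏_{r<m} σ^{rN}(b)` modulo `c b`, so `b ∈ √I`.
-/

/-- The Gaussian (q-)binomial coefficient, defined by the q-Pascal recursion. -/
def qbinom {R : Type*} [CommRing R] (q : R) : ℕ → ℕ → R
  | _, 0 => 1
  | 0, _ + 1 => 0
  | n + 1, k + 1 => qbinom q n k + q ^ (k + 1) * qbinom q n (k + 1)

/-- An iterative `q`-difference ring structure on a commutative ring `R`,
relative to distinguished elements `q` and `t` of `R` (the images of the root
of unity `q ∈ C` and of the variable `t ∈ C(t)`).  It consists of a ring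
automorphism `σ` (extending `f(t) ↦ f(qt)`) and a family of additive maps
`δ^{(k)}` satisfying `δ^{(0)} = id`, `δ^{(1)} = (σ − id)/((q−1)t)`, the twisted
Leibniz rule, and the iteration rule
`δ^{(i)} ∘ δ^{(j)} = [i+j, i]_q δ^{(i+j)}`. -/
structure IDqRing (R : Type*) [CommRing R] (q t : R) where
  σ : R ≃+* R
  δ : ℕ → R →+ R
  δ_zero : ∀ a : R, δ 0 a = a
  δ_one : ∀ a : R, (q - 1) * t * δ 1 a = σ a - a
  σ_q : σ q = q
  σ_t : σ t = q * t
  δ_q : ∀ k, 0 < k → δ k q = 0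
  δ_t : ∀ k, 1 < k → δ k t = 0
  leibniz : ∀ (k : ℕ) (a b : R),
    δ k (a * b) = ∑ ij ∈ Finset.HasAntidiagonal.antidiagonal k, (⇑σ)^[ij.1] (δ ij.2 a) * δ ij.1 b
  iter : ∀ (i j : ℕ) (a : R), δ i (δ j a) = qbinom q (i + j) i * δ (i + j) a

open Finset

section

variable {R : Type*} [CommRing R]

lemma qbinom_zero_right (q : R) (n : ℕ) : qbinom q n 0 = 1 := by
  cases n <;> rfl

lemma sub_one_mul_qbinom_one (q : R) (n : ℕ) :
    (q - 1) * qbinom q n 1 = q ^ n - 1 := by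
  induction n with
  | zero => simp [qbinom]
  | succ n ih =>
    rw [qbinom, qbinom_zero_right]
    linear_combination q * ih

lemma prod_pow_sub_pow_succ (q : R) (m l : ℕ) :
    ∏ j ∈ range (l + 1), (q ^ (m + 1) - q ^ j)
      = q ^ (l + 1) * ∏ j ∈ range (l + 1), (q ^ m - q ^ j)
        + q ^ l * (q ^ (l + 1) - 1) * ∏ j ∈ range l, (q ^ m - q ^ j) := by
  have hshift : ∏ j ∈ range l, (q ^ (m + 1) - q ^ (j + 1))
      = q ^ l * ∏ j ∈ range l, (q ^ m - q ^ j) := by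
    rw [← card_range l, ← prod_const, card_range, ← prod_mul_distrib]
    exact prod_congr rfl fun j _ => by ring
  rw [prod_range_succ', hshift, prod_range_succ]
  ring

lemma dvd_prod_sub_pow {c b : R} {f : ℕ → R}
    (hf : ∀ r, c ∣ f r - b) (m : ℕ) : c ∣ ∏ r ∈ range m, f r - b ^ m := by
  induction m with
  | zero => simp
  | succ m ih =>
    rw [prod_range_succ, pow_succ]
    have : (∏ r ∈ range m, f r) * f m - b ^ m * b
        = (∏ r ∈ range m, f r - b ^ m) * f m + b ^ m * (f m - b) := by ring
    rw [this]
    exact dvd_add (dvd_mul_of_dvd_left ih _) (dvd_mul_of_dvd_right (hf m) _)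

lemma Ideal.mapsTo_radical {F : Type*} [FunLike F R R] [RingHomClass F R R]
    {f : F} {J : Ideal R} (hJ : Set.MapsTo f J J) : Set.MapsTo f J.radical J.radical := by
  change J.radical ≤ J.radical.comap f
  rw [Ideal.comap_radical]
  exact Ideal.radical_mono hJ

end

namespace IDqRing

variable {R : Type*} [CommRing R] {q t : R} (D : IDqRing R q t)

lemma delta_one_delta (k : ℕ) (z : R) :
    D.δ 1 (D.δ k z) = qbinom q (k + 1) 1 * D.δ (k + 1) z := by
  rw [D.iter, add_comm 1 k]

lemma sigma_delta (k : ℕ) (z : R) :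
    D.σ (D.δ k z) = D.δ k z + (q ^ (k + 1) - 1) * t * D.δ (k + 1) z := by
  rw [← sub_one_mul_qbinom_one, ← sub_eq_iff_eq_add', ← D.δ_one, delta_one_delta]
  ring

lemma mapsTo_sigma {J : Ideal R} (hJ : ∀ x ∈ J, D.δ 1 x ∈ J) : Set.MapsTo D.σ J J := by
  intro x hx
  have := D.sigma_delta 0 x
  rw [D.δ_zero, zero_add, pow_one] at this
  rw [SetLike.mem_coe, this]
  exact J.add_mem hx (J.mul_mem_left _ (hJ x hx))

theorem sigma_iterate_eq_sum (m : ℕ) (z : R) :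
    (⇑D.σ)^[m] z
      = ∑ l ∈ range (m + 1), (∏ j ∈ range l, (q ^ m - q ^ j)) * t ^ l * D.δ l z := by
  induction m with
  | zero => simp [D.δ_zero]
  | succ m ih =>
    set c : ℕ → R := fun l => ∏ j ∈ range l, (q ^ m - q ^ j)
    have hσc : ∀ l, D.σ (c l) = c l := fun l => by simp [c, map_prod, D.σ_q]
    have hcm : c (m + 1) = 0 := prod_eq_zero (self_mem_range_succ m) (sub_self _)
    set A : ℕ → R := fun l => q ^ l * c l * t ^ l * D.δ l z
    set B : ℕ → R := fun l => q ^ l * (q ^ (l + 1) - 1) * c l * t ^ (l + 1) * D.δ (l + 1) z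
    have hσterm : ∀ l, D.σ (c l * t ^ l * D.δ l z) = A l + B l := fun l => by
      rw [map_mul, map_mul, hσc, map_pow, D.σ_t, sigma_delta]
      ring
    have hcoeff : ∀ l,
        (∏ j ∈ range (l + 1), (q ^ (m + 1) - q ^ j)) * t ^ (l + 1) * D.δ (l + 1) z
          = A (l + 1) + B l := fun l => by
      rw [prod_pow_sub_pow_succ]
      ring
    calc (⇑D.σ)^[m + 1] z
        = ∑ l ∈ range (m + 1), A l + ∑ l ∈ range (m + 1), B l := by
          rw [Function.iterate_succ_apply', ih, map_sum, ← sum_add_distrib]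
          exact sum_congr rfl fun l _ => hσterm l
      _ = A 0 + ∑ l ∈ range (m + 1), (A (l + 1) + B l) := by
          rw [sum_add_distrib, ← add_assoc, add_comm (A 0), ← sum_range_succ',
            sum_range_succ A (m + 1)]
          simp [A, hcm]
      _ = _ := by
          rw [sum_range_succ' _ (m + 1)]
          simp only [hcoeff]
          simp [A, c, D.δ_zero, add_comm]

theorem mul_dvd_sigma_iterate_sub (m : ℕ) (z : R) : (q ^ m - 1) * t ∣ (⇑D.σ)^[m] z - z := by
  rw [sigma_iterate_eq_sum, sum_range_succ']
  simp only [prod_range_zero, pow_zero, one_mul, D.δ_zero, add_sub_cancel_right]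
  refine dvd_sum fun l _ => ?_
  rw [prod_range_succ', pow_succ]
  exact Dvd.intro ((∏ j ∈ range l, (q ^ m - q ^ (j + 1))) * t ^ l * D.δ (l + 1) z) (by ring)

section Leibniz

variable {J : Ideal R} (hJ : Set.MapsTo D.σ J J) {a : R} {N : ℕ} (ha : ∀ j < N, D.δ j a ∈ J)
include hJ ha

theorem delta_pow_mem_of_lt (m : ℕ) : ∀ i < m * N, D.δ i (a ^ m) ∈ J := by
  induction m with
  | zero => simp
  | succ m ih =>
    intro i hi
    rw [pow_succ', D.leibniz]
    refine J.sum_mem fun ij hij => ?_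
    rw [HasAntidiagonal.mem_antidiagonal] at hij
    by_cases hj : ij.2 < N
    · exact J.mul_mem_right _ (hJ.iterate _ (ha _ hj))
    · exact J.mul_mem_left _ (ih _ (by rw [add_one_mul] at hi; omega))

theorem delta_mul_pow_sub_prod_mem (m : ℕ) :
    D.δ (m * N) (a ^ m) - ∏ r ∈ range m, (⇑D.σ)^[r * N] (D.δ N a) ∈ J := by
  induction m with
  | zero => simp [D.δ_zero]
  | succ m ih =>
    have hmain : (m * N, N) ∈ antidiagonal ((m + 1) * N) := by
      rw [HasAntidiagonal.mem_antidiagonal, add_one_mul]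
    have hrest : ∑ ij ∈ (antidiagonal ((m + 1) * N)).erase (m * N, N),
        (⇑D.σ)^[ij.1] (D.δ ij.2 a) * D.δ ij.1 (a ^ m) ∈ J := by
      refine J.sum_mem fun ij hij => ?_
      obtain ⟨hne, hij⟩ := mem_erase.mp hij
      rw [HasAntidiagonal.mem_antidiagonal, add_one_mul] at hij
      rcases lt_trichotomy ij.2 N with hlt | heq | hgt
      · exact J.mul_mem_right _ (hJ.iterate _ (ha _ hlt))
      · exact absurd (Prod.ext (by omega) heq) hne
      · exact J.mul_mem_left _ (D.delta_pow_mem_of_lt hJ ha m _ (by omega))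
    rw [pow_succ', D.leibniz, ← add_sum_erase _ _ hmain, prod_range_succ]
    convert J.add_mem (J.mul_mem_left ((⇑D.σ)^[m * N] (D.δ N a)) ih) hrest using 1
    ring

end Leibniz

theorem delta_succ_mem_radical {I : Ideal R} (hI : ∀ k, ∀ a ∈ I, D.δ k a ∈ I) {a : R}
    (ha : a ∈ I.radical) {K : ℕ} (hlow : ∀ j ≤ K, D.δ j a ∈ I.radical) :
    D.δ (K + 1) a ∈ I.radical := by
  set N := K + 1
  set b := D.δ N a
  set c := (q ^ N - 1) * t
  have hσ : Set.MapsTo D.σ I.radical I.radical := Ideal.mapsTo_radical (D.mapsTo_sigma (hI 1))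
  obtain ⟨m, hm⟩ := ha
  have hprod : ∏ r ∈ range m, (⇑D.σ)^[r * N] b ∈ I.radical := by
    have := D.delta_mul_pow_sub_prod_mem (N := N) hσ (fun j hj => hlow j (Nat.le_of_lt_succ hj))
      m
    simpa only [sub_sub_cancel] using I.radical.sub_mem (Ideal.le_radical (hI (m * N) _ hm)) this
  have hcb : c * b ∈ I.radical := by
    rw [← add_sub_cancel_left (D.δ K a) (c * b), ← D.sigma_delta]
    exact I.radical.sub_mem (hσ (hlow K le_rfl)) (hlow K le_rfl)
  obtain ⟨x, hx⟩ : c ∣ ∏ r ∈ range m, (⇑D.σ)^[r * N] b - b ^ m :=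
    dvd_prod_sub_pow (fun r =>
      (mul_dvd_mul_right (dvd_pow_sub_one_of_dvd (dvd_mul_left N r)) t).trans
        (D.mul_dvd_sigma_iterate_sub _ b)) m
  refine Ideal.mem_radical_of_pow_mem (m := m + 1) ?_
  have hpow : b ^ (m + 1) = b * ∏ r ∈ range m, (⇑D.σ)^[r * N] b - c * b * x := by
    linear_combination (-b) * hx
  rw [hpow]
  exact I.radical.sub_mem (I.radical.mul_mem_left _ hprod) (I.radical.mul_mem_right _ hcb)

end IDqRing

theorem radical_IDq_ideal_general {R : Type*} [CommRing R] (q t : R)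
    (D : IDqRing R q t) (I : Ideal R)
    (hI : ∀ k : ℕ, ∀ a ∈ I, D.δ k a ∈ I) :
    ∀ k : ℕ, ∀ a ∈ I.radical, D.δ k a ∈ I.radical := by
  intro k a ha
  induction k using Nat.strong_induction_on with
  | _ k ih =>
    cases k with
    | zero => rwa [D.δ_zero]
    | succ K => exact D.delta_succ_mem_radical hI ha fun j hj => ih j (Nat.lt_succ_of_le hj)

/-- The radical of an iterative `q`-difference ideal (an ideal stable under all
`δ^{(k)}`) is again an iterative `q`-difference ideal. Here `q` is a primitive
`n`-th root of unity. -/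
theorem radical_IDq_ideal {R : Type*} [CommRing R] (q t : R) (n : ℕ)
    (hq : IsPrimitiveRoot q n) (D : IDqRing R q t) (I : Ideal R)
    (hI : ∀ k : ℕ, ∀ a ∈ I, D.δ k a ∈ I) :
    ∀ k : ℕ, ∀ a ∈ I.radical, D.δ k a ∈ I.radical :=
  radical_IDq_ideal_general q t D I hI
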